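/- arXiv:1605.01322 — 4 statements merged into one kernel-verified Lean document; each statement's English description precedes it below -/
import Mathlib

section
/- If a finite abstract simplicial complex K admits a cover by n+1 categorical subcomplexes, then K admits a cover by n+1 categorical subcomplexes each of which is a union of maximal simplices of K, and moreover such that each maximal simplex of K is contained in exactly one element of the cover. -/
/-- An abstract simplicial complex on a vertex type `V`:
a downward-closed family of nonempty finite sets of vertices. -/
structure AbsSC (V : Type) where
  faces : Set (Finset V)
  nonempty_of_mem : ∀ σ ∈ faces, σ.Nonempty
  down_closed : ∀ σ ∈ faces, ∀ τ : Finset V, τ ⊆ σ → τ.Nonempty → τ ∈ faces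

namespace AbsSC

variable {V W V' W' : Type} [DecidableEq V] [DecidableEq W]

/-- `f` is a simplicial map from `K` to `L`. -/
def IsSimplicial (K : AbsSC V) (L : AbsSC W) (f : V → W) : Prop :=
  ∀ σ ∈ K.faces, σ.image f ∈ L.faces

/-- Two simplicial maps are contiguous. -/
def Contig (K : AbsSC V) (L : AbsSC W) (f g : V → W) : Prop :=
  IsSimplicial K L f ∧ IsSimplicial K L g ∧
    ∀ σ ∈ K.faces, σ.image f ∪ σ.image g ∈ L.faces

/-- Two maps are in the same contiguity class: they are connected by a
finite chain of pairwise contiguous simplicial maps. -/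
def ContigClass (K : AbsSC V) (L : AbsSC W) : (V → W) → (V → W) → Prop :=
  Relation.ReflTransGen (Contig K L)

/-- `U` is a categorical subcomplex of `K`: the inclusion is in the
contiguity class of a constant map onto a vertex of `K`. -/
def Categorical (K U : AbsSC V) : Prop :=
  U.faces ⊆ K.faces ∧ ∃ v : V, {v} ∈ K.faces ∧ ContigClass U K id (fun _ => v)

/-- `K` is covered by `n+1` categorical subcomplexes. -/
def CatCover (K : AbsSC V) (n : ℕ) : Prop :=
  ∃ U : Fin (n + 1) → AbsSC V, (∀ i, Categorical K (U i)) ∧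
    ∀ σ ∈ K.faces, ∃ i, σ ∈ (U i).faces

/-- The simplicial Lusternik–Schnirelmann category of `K`. -/
noncomputable def scat (K : AbsSC V) : ℕ := sInf {n | CatCover K n}

/-- A maximal simplex of `K`. -/
def MaximalFace (K : AbsSC V) (σ : Finset V) : Prop :=
  σ ∈ K.faces ∧ ∀ τ ∈ K.faces, σ ⊆ τ → σ = τ

/-- The vertex `v` is dominated (by some other vertex `v'`). -/
def Dominated (K : AbsSC V) (v : V) : Prop :=
  ∃ v' : V, v' ≠ v ∧ {v} ∈ K.faces ∧ {v'} ∈ K.faces ∧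
    ∀ σ : Finset V, MaximalFace K σ → v ∈ σ → v' ∈ σ

/-- A minimal complex: no vertex is dominated. -/
def Minimal (K : AbsSC V) : Prop := ∀ v : V, ¬ Dominated K v

/-- Deleting (the open star of) a vertex. -/
def delete (K : AbsSC V) (v : V) : AbsSC V where
  faces := {σ ∈ K.faces | v ∉ σ}
  nonempty_of_mem := fun σ h => K.nonempty_of_mem σ h.1
  down_closed := fun σ h τ hτ hne =>
    ⟨K.down_closed σ h.1 τ hτ hne, fun hv => h.2 (hτ hv)⟩

/-- An elementary strong collapse: removal of the open star of a dominated vertex. -/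
def ElemStrongCollapse (K L : AbsSC V) : Prop :=
  ∃ v : V, Dominated K v ∧ L = K.delete v

/-- A complex consisting of a single vertex. -/
def IsPoint (K : AbsSC V) : Prop := ∃ v : V, K.faces = {{v}}

/-- `K` is strongly collapsible: it reduces to a single vertex by a
sequence of elementary strong collapses. -/
def StronglyCollapsible (K : AbsSC V) : Prop :=
  ∃ L : AbsSC V, Relation.ReflTransGen ElemStrongCollapse K L ∧ IsPoint L

/-- `K` is covered by `n+1` subcomplexes, each strongly collapsible in itself. -/
def GCatCover (K : AbsSC V) (n : ℕ) : Prop :=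
  ∃ U : Fin (n + 1) → AbsSC V,
    (∀ i, (U i).faces ⊆ K.faces ∧ StronglyCollapsible (U i)) ∧
    ∀ σ ∈ K.faces, ∃ i, σ ∈ (U i).faces

/-- The geometric simplicial category of `K`. -/
noncomputable def gscat (K : AbsSC V) : ℕ := sInf {n | GCatCover K n}

/-- Strong homotopy equivalence of complexes. -/
def StrongEquiv (K : AbsSC V) (L : AbsSC W) : Prop :=
  ∃ (φ : V → W) (ψ : W → V), IsSimplicial K L φ ∧ IsSimplicial L K ψ ∧
    ContigClass K K (ψ ∘ φ) id ∧ ContigClass L L (φ ∘ ψ) id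

/-- The barycentric subdivision: vertices are the simplices of `K`,
simplices are the chains of simplices of `K`. -/
def sd (K : AbsSC V) : AbsSC (Finset V) where
  faces := {S | S.Nonempty ∧ (∀ σ ∈ S, σ ∈ K.faces) ∧
    ∀ σ ∈ S, ∀ τ ∈ S, σ ⊆ τ ∨ τ ⊆ σ}
  nonempty_of_mem := fun S hS => hS.1
  down_closed := fun S hS T hTS hT =>
    ⟨hT, fun σ hσ => hS.2.1 σ (hTS hσ),
      fun σ hσ τ hτ => hS.2.2 σ (hTS hσ) τ (hTS hτ)⟩

/-- The categorical product of simplicial complexes. -/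
def prod (K : AbsSC V) (L : AbsSC W) : AbsSC (V × W) where
  faces := {σ | σ.Nonempty ∧ σ.image Prod.fst ∈ K.faces ∧ σ.image Prod.snd ∈ L.faces}
  nonempty_of_mem := fun σ h => h.1
  down_closed := fun σ h τ hτ hne =>
    ⟨hne, K.down_closed _ h.2.1 _ (Finset.image_subset_image hτ) (hne.image _),
      L.down_closed _ h.2.2 _ (Finset.image_subset_image hτ) (hne.image _)⟩

/-- The `n`-fold categorical power of `K`. -/
def power (K : AbsSC V) (n : ℕ) : AbsSC (Fin n → V) where
  faces := {σ | σ.Nonempty ∧ ∀ j : Fin n, σ.image (fun f => f j) ∈ K.faces}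
  nonempty_of_mem := fun σ h => h.1
  down_closed := by
    intro σ h τ hτ hne
    exact ⟨hne, fun j => K.down_closed _ (h.2 j) _ (Finset.image_subset_image hτ) (hne.image _)⟩

/-- The `n`-th fat wedge of a pointed complex `(K, v₀)` inside `Kⁿ`. -/
def fatWedge (K : AbsSC V) (n : ℕ) (v₀ : V) : AbsSC (Fin n → V) where
  faces := {σ | σ ∈ (K.power n).faces ∧ ∃ j : Fin n, ∀ f ∈ σ, f j = v₀}
  nonempty_of_mem := fun σ h => (K.power n).nonempty_of_mem σ h.1
  down_closed := fun σ h τ hτ hne =>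
    ⟨(K.power n).down_closed σ h.1 τ hτ hne,
      h.2.imp fun j hj f hf => hj f (hτ hf)⟩

/-- The part of a set of vertices of a disjoint union lying in the left factor. -/
noncomputable def sumLeft (σ : Finset (V ⊕ W)) : Finset V :=
  σ.preimage Sum.inl Sum.inl_injective.injOn

/-- The part of a set of vertices of a disjoint union lying in the right factor. -/
noncomputable def sumRight (σ : Finset (V ⊕ W)) : Finset W :=
  σ.preimage Sum.inr Sum.inr_injective.injOn

/-- The simplicial join `K ∗ L`. -/
def join (K : AbsSC V) (L : AbsSC W) : AbsSC (V ⊕ W) where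
  faces := {σ | σ.Nonempty ∧ ((sumLeft σ).Nonempty → sumLeft σ ∈ K.faces) ∧
    ((sumRight σ).Nonempty → sumRight σ ∈ L.faces)}
  nonempty_of_mem := fun σ h => h.1
  down_closed := by
    intro σ h τ hτ hne
    have hl : sumLeft τ ⊆ sumLeft σ := fun x hx => by
      rw [sumLeft, Finset.mem_preimage] at *; exact hτ hx
    have hr : sumRight τ ⊆ sumRight σ := fun x hx => by
      rw [sumRight, Finset.mem_preimage] at *; exact hτ hx
    exact ⟨hne,
      fun h1 => K.down_closed _ (h.2.1 (h1.mono hl)) _ hl h1,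
      fun h1 => L.down_closed _ (h.2.2 (h1.mono hr)) _ hr h1⟩

/-- A graph: a simplicial complex of dimension at most 1. -/
def IsGraph (G : AbsSC V) : Prop := ∀ σ ∈ G.faces, σ.card ≤ 2

/-- A connected (nonempty) complex: any two vertices are joined by an edge path. -/
def ConnectedG (G : AbsSC V) : Prop :=
  G.faces.Nonempty ∧
    ∀ u v : V, {u} ∈ G.faces → {v} ∈ G.faces →
      ∃ (n : ℕ) (p : Fin (n + 1) → V), p 0 = u ∧ p (Fin.last n) = v ∧
        ∀ i : Fin n, ({p i.castSucc, p i.succ} : Finset V) ∈ G.faces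

/-- A cycle of length `n` in a graph: `n ≥ 3` distinct vertices joined cyclically by edges. -/
def IsCycle (G : AbsSC V) (n : ℕ) (p : ZMod n → V) : Prop :=
  3 ≤ n ∧ Function.Injective p ∧
    ∀ i : ZMod n, ({p i, p (i + 1)} : Finset V) ∈ G.faces

/-- A forest: a graph containing no cycle. -/
def IsForest (G : AbsSC V) : Prop := ∀ (n : ℕ) (p : ZMod n → V), ¬ IsCycle G n p

/-- A tree: a connected forest. -/
def IsTree (G : AbsSC V) : Prop := IsForest G ∧ ConnectedG G

/-- A decomposition of a graph into `k` edge-disjoint spanning forests. -/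
def EdgeDisjointForestDecomp (G : AbsSC V) (k : ℕ) : Prop :=
  ∃ F : Fin k → AbsSC V,
    (∀ i, (F i).faces ⊆ G.faces ∧ IsForest (F i) ∧
      ∀ v : V, {v} ∈ G.faces → {v} ∈ (F i).faces) ∧
    (∀ σ ∈ G.faces, ∃ i, σ ∈ (F i).faces) ∧
    ∀ (i j : Fin k) (σ : Finset V), σ.card = 2 →
      σ ∈ (F i).faces → σ ∈ (F j).faces → i = j

/-- The arboricity of a graph. -/
noncomputable def arboricity (G : AbsSC V) : ℕ :=
  sInf {k | EdgeDisjointForestDecomp G k}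

end AbsSC

/-!
Fix, for every maximal simplex `σ` of `K`, one member `U i` of the given cover containing it,
and replace `U i` by the subcomplex generated by the maximal simplices assigned to `i`. Since
`K` is finite, every simplex lies in a maximal one, so the new family still covers `K`; each new
member is a subcomplex of the old one, and categoricity passes to subcomplexes because a chain of
contiguities out of `U i` restricts to one out of any subcomplex.
-/

namespace AbsSC

section Restriction

variable {V W : Type} [DecidableEq W] {K K' : AbsSC V} {L : AbsSC W}

theorem IsSimplicial.mono {f : V → W} (hK : K'.faces ⊆ K.faces) (hf : IsSimplicial K L f) :
    IsSimplicial K' L f :=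
  fun σ hσ => hf σ (hK hσ)

theorem Contig.mono {f g : V → W} (hK : K'.faces ⊆ K.faces) (hfg : Contig K L f g) :
    Contig K' L f g :=
  ⟨hfg.1.mono hK, hfg.2.1.mono hK, fun σ hσ => hfg.2.2 σ (hK hσ)⟩

theorem ContigClass.mono {f g : V → W} (hK : K'.faces ⊆ K.faces) (hfg : ContigClass K L f g) :
    ContigClass K' L f g :=
  Relation.ReflTransGen.mono (fun _ _ h => Contig.mono hK h) _ _ hfg

end Restriction

variable {V : Type}

theorem Categorical.mono [DecidableEq V] {K U U' : AbsSC V} (hU : U'.faces ⊆ U.faces)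
    (h : Categorical K U) : Categorical K U' := by
  obtain ⟨hUK, v, hv, hcontig⟩ := h
  exact ⟨hU.trans hUK, v, hv, hcontig.mono hU⟩

theorem maximalFace_iff {K : AbsSC V} {σ : Finset V} :
    MaximalFace K σ ↔ Maximal (· ∈ K.faces) σ := by
  rw [maximal_iff]
  rfl

theorem exists_maximalFace_superset [Finite V] (K : AbsSC V) {τ : Finset V}
    (hτ : τ ∈ K.faces) : ∃ σ, MaximalFace K σ ∧ τ ⊆ σ := by
  obtain ⟨σ, hτσ, hσ⟩ := K.faces.toFinite.exists_le_maximal hτ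
  exact ⟨σ, maximalFace_iff.2 hσ, hτσ⟩

def downClosure (S : Set (Finset V)) : AbsSC V where
  faces := {τ | τ.Nonempty ∧ ∃ σ ∈ S, τ ⊆ σ}
  nonempty_of_mem _ hτ := hτ.1
  down_closed _ hτ _ hρτ hρ := ⟨hρ, hτ.2.imp fun _ hσ => ⟨hσ.1, hρτ.trans hσ.2⟩⟩

theorem downClosure_faces_subset {S : Set (Finset V)} {U : AbsSC V} (hS : S ⊆ U.faces) :
    (downClosure S).faces ⊆ U.faces :=
  fun _ ⟨hτ, σ, hσ, hτσ⟩ => U.down_closed σ (hS hσ) _ hτσ hτ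

theorem mem_downClosure_of_mem {S : Set (Finset V)} {σ : Finset V} (hσ : σ ∈ S)
    (hne : σ.Nonempty) : σ ∈ (downClosure S).faces :=
  ⟨hne, σ, hσ, subset_rfl⟩

theorem exists_refinement_by_maximalFaces [Finite V] {ι : Type} (K : AbsSC V)
    (U : ι → AbsSC V) (hcov : ∀ σ, MaximalFace K σ → ∃ i, σ ∈ (U i).faces) :
    ∃ U' : ι → AbsSC V, (∀ i, (U' i).faces ⊆ (U i).faces) ∧
      (∀ τ ∈ K.faces, ∃ i, τ ∈ (U' i).faces) ∧
      (∀ i, ∀ τ ∈ (U' i).faces, ∃ σ, MaximalFace K σ ∧ σ ∈ (U' i).faces ∧ τ ⊆ σ) ∧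
      (∀ σ, MaximalFace K σ → ∃! i, σ ∈ (U' i).faces) := by
  choose f hf using fun σ : {σ // MaximalFace K σ} => hcov σ σ.2
  let fiber (i : ι) : Set (Finset V) := Subtype.val '' (f ⁻¹' {i})
  have mem_fiber (σ : {σ // MaximalFace K σ}) : σ.1 ∈ fiber (f σ) := ⟨σ, rfl, rfl⟩
  have nonempty_of_maximal {σ} (hσ : MaximalFace K σ) : σ.Nonempty :=
    K.nonempty_of_mem σ hσ.1
  refine ⟨fun i => downClosure (fiber i), ?_, ?_, ?_, ?_⟩
  · intro i
    refine downClosure_faces_subset ?_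
    rintro - ⟨σ, rfl, rfl⟩
    exact hf σ
  · intro τ hτ
    obtain ⟨σ, hσ, hτσ⟩ := exists_maximalFace_superset K hτ
    exact ⟨f ⟨σ, hσ⟩, K.nonempty_of_mem τ hτ, σ, mem_fiber ⟨σ, hσ⟩, hτσ⟩
  · rintro i τ ⟨-, -, ⟨σ, rfl, rfl⟩, hτσ⟩
    exact ⟨σ, σ.2, mem_downClosure_of_mem (mem_fiber σ) (nonempty_of_maximal σ.2), hτσ⟩
  · intro σ hσ
    refine ⟨f ⟨σ, hσ⟩, mem_downClosure_of_mem (mem_fiber _) (nonempty_of_maximal hσ), ?_⟩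
    rintro i ⟨-, -, ⟨ρ, rfl, rfl⟩, hσρ⟩
    obtain rfl : σ = ρ := hσ.2 ρ ρ.2.1 hσρ
    rfl

end AbsSC

/-- a categorical cover can be replaced by one whose members are
unions of maximal simplices, each maximal simplex lying in exactly one member. -/
theorem catCover_maximal {V : Type} [DecidableEq V] [Fintype V]
    (K : AbsSC V) (n : ℕ) (h : AbsSC.CatCover K n) :
    ∃ U : Fin (n + 1) → AbsSC V,
      (∀ i, AbsSC.Categorical K (U i)) ∧
      (∀ σ ∈ K.faces, ∃ i, σ ∈ (U i).faces) ∧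
      (∀ i, ∀ τ ∈ (U i).faces, ∃ σ : Finset V,
        AbsSC.MaximalFace K σ ∧ σ ∈ (U i).faces ∧ τ ⊆ σ) ∧
      (∀ σ : Finset V, AbsSC.MaximalFace K σ → ∃! i, σ ∈ (U i).faces) := by
  obtain ⟨U, hcat, hcov⟩ := h
  obtain ⟨U', hsub, hcov', hgen, huniq⟩ :=
    AbsSC.exists_refinement_by_maximalFaces K U fun σ hσ => hcov σ hσ.1
  exact ⟨U', fun i => (hcat i).mono (hsub i), hcov', hgen, huniq⟩
end

section
/- If two simplicial maps φ, ψ : K → L between finite simplicial complexes are in the same contiguity class, then the induced maps sd φ, sd ψ : sd K → sd L on the barycentric subdivisions are in the same contiguity class. -/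
/-!
Given one contiguity `f ~ g`, interpolate between `sd f` and the map `σ ↦ f σ ∪ g σ` by the maps
that take the value `f σ` on simplices with at most `i` vertices and `f σ ∪ g σ` on the larger
ones. Moving the threshold `i` by one keeps the image of every chain of `sd K` a chain, so
consecutive interpolants are contiguous; for `i = #V` the interpolant is `sd f`, and for `i = 0`
it is symmetric in `f` and `g`. Hence `sd f` and `sd g` lie in one contiguity class, and the
general case follows along a chain of contiguities.
-/

namespace AbsSC

open Finset

variable {V W : Type} [DecidableEq W] {K : AbsSC V} {L : AbsSC W} {f g : V → W}

theorem contig_of_union_mem (h : ∀ σ ∈ K.faces, σ.image f ∪ σ.image g ∈ L.faces) :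
    Contig K L f g :=
  ⟨fun σ hσ => L.down_closed _ (h σ hσ) _ subset_union_left ((K.nonempty_of_mem σ hσ).image f),
    fun σ hσ => L.down_closed _ (h σ hσ) _ subset_union_right ((K.nonempty_of_mem σ hσ).image g),
    h⟩

theorem Contig.symm (h : Contig K L f g) : Contig K L g f :=
  ⟨h.2.1, h.1, fun σ hσ => union_comm (σ.image f) _ ▸ h.2.2 σ hσ⟩

instance : Std.Symm (Contig K L) := ⟨fun _ _ => Contig.symm⟩

theorem ContigClass.symm (h : ContigClass K L f g) : ContigClass K L g f :=
  Std.Symm.symm (r := Relation.ReflTransGen (Contig K L)) _ _ h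

def sdInterp (f g : V → W) (i : ℕ) (σ : Finset V) : Finset W :=
  if #σ ≤ i then σ.image f else σ.image f ∪ σ.image g

theorem sdInterp_zero_comm (f g : V → W) : sdInterp f g 0 = sdInterp g f 0 := by
  funext σ
  rcases σ.eq_empty_or_nonempty with rfl | hσ
  · simp [sdInterp]
  · simp [sdInterp, hσ.card_pos.ne', union_comm]

theorem sdInterp_card [Fintype V] (f g : V → W) :
    sdInterp f g (Fintype.card V) = fun σ => σ.image f :=
  funext fun σ => if_pos (card_le_univ σ)

theorem sdInterp_mem_faces (hfg : Contig K L f g) (i : ℕ) {σ : Finset V} (hσ : σ ∈ K.faces) :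
    sdInterp f g i σ ∈ L.faces := by
  unfold sdInterp
  split_ifs
  · exact hfg.1 σ hσ
  · exact hfg.2.2 σ hσ

theorem sdInterp_subset_or_subset_of_subset {σ τ : Finset V} (hστ : σ ⊆ τ) {j k : ℕ}
    (hkj : k ≤ j + 1) :
    sdInterp f g j σ ⊆ sdInterp f g k τ ∨ sdInterp f g k τ ⊆ sdInterp f g j σ := by
  have hf := image_subset_image (f := f) hστ
  have hg := image_subset_image (f := g) hστ
  unfold sdInterp
  split_ifs with hσ hτ hτ
  · exact .inl hf
  · exact .inl (hf.trans subset_union_left)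
  -- `#τ ≤ k ≤ j + 1 ≤ #σ` forces `σ = τ`
  · obtain rfl := eq_of_subset_of_card_le hστ (by omega)
    exact .inr subset_union_left
  · exact .inl (union_subset_union hf hg)

theorem sdInterp_subset_or_subset {σ τ : Finset V} (hστ : σ ⊆ τ ∨ τ ⊆ σ) {j k : ℕ}
    (hjk : j ≤ k + 1) (hkj : k ≤ j + 1) :
    sdInterp f g j σ ⊆ sdInterp f g k τ ∨ sdInterp f g k τ ⊆ sdInterp f g j σ :=
  hστ.elim (sdInterp_subset_or_subset_of_subset · hkj)
    fun h => (sdInterp_subset_or_subset_of_subset h hjk).symm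

theorem sdInterp_succ_contig (hfg : Contig K L f g) (i : ℕ) :
    Contig (sd K) (sd L) (sdInterp f g (i + 1)) (sdInterp f g i) := by
  refine contig_of_union_mem fun S ⟨hne, hfaces, hchain⟩ => ?_
  have hmem : ∀ a ∈ S.image (sdInterp f g (i + 1)) ∪ S.image (sdInterp f g i),
      ∃ σ ∈ S, ∃ j, (j = i + 1 ∨ j = i) ∧ a = sdInterp f g j σ := by
    simp only [mem_union, mem_image]
    rintro a (⟨σ, hσ, rfl⟩ | ⟨σ, hσ, rfl⟩)
    exacts [⟨σ, hσ, _, .inl rfl, rfl⟩, ⟨σ, hσ, _, .inr rfl, rfl⟩]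
  refine ⟨(hne.image _).mono subset_union_left, fun a ha => ?_, fun a ha b hb => ?_⟩
  · obtain ⟨σ, hσ, j, -, rfl⟩ := hmem a ha
    exact sdInterp_mem_faces hfg j (hfaces σ hσ)
  · obtain ⟨σ, hσ, j, hj, rfl⟩ := hmem a ha
    obtain ⟨τ, hτ, k, hk, rfl⟩ := hmem b hb
    exact sdInterp_subset_or_subset (hchain σ hσ τ hτ) (by omega) (by omega)

theorem sdInterp_contigClass_zero (hfg : Contig K L f g) (n : ℕ) :
    ContigClass (sd K) (sd L) (sdInterp f g n) (sdInterp f g 0) :=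
  (reflTransGen_of_succ_of_ge _ (fun i _ => sdInterp_succ_contig hfg i) n.zero_le).lift
    (sdInterp f g) fun _ _ => id

theorem Contig.sd_contigClass [Fintype V] (hfg : Contig K L f g) :
    ContigClass (sd K) (sd L) (fun σ => σ.image f) (fun σ => σ.image g) := by
  rw [← sdInterp_card f g, ← sdInterp_card g f]
  exact (sdInterp_contigClass_zero hfg _).trans
    (sdInterp_zero_comm f g ▸ (sdInterp_contigClass_zero hfg.symm _).symm)

end AbsSC

/-- barycentric subdivision preserves contiguity classes. -/
theorem sd_contigClass {V W : Type} [DecidableEq W]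
    [Fintype V]
    (K : AbsSC V) (L : AbsSC W) (φ ψ : V → W)
    (h : AbsSC.ContigClass K L φ ψ) :
    AbsSC.ContigClass (AbsSC.sd K) (AbsSC.sd L)
      (fun σ => σ.image φ) (fun σ => σ.image ψ) :=
  Relation.ReflTransGen.lift' (fun f (σ : Finset V) => σ.image f)
    (fun _ _ => AbsSC.Contig.sd_contigClass) _ _ h
end

section
/- For any finite abstract simplicial complex K, the topological LS-category of the geometric realization satisfies cat |K| ≤ scat K. -/
open scoped Classical in
/-- The geometric realization of `K`, as a subspace of `V → ℝ`. -/
noncomputable def AbsSC.geomReal {V : Type} [DecidableEq V] [Fintype V]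
    (K : AbsSC V) : Set (V → ℝ) :=
  {f | (∀ v, 0 ≤ f v) ∧ (∑ v, f v) = 1 ∧
    (Finset.univ.filter fun v => f v ≠ 0) ∈ K.faces}

/-- `X` admits a cover by `n+1` open subsets, each contractible within `X`. -/
def TopCatCover (X : Type*) [TopologicalSpace X] (n : ℕ) : Prop :=
  ∃ U : Fin (n + 1) → Set X, (∀ i, IsOpen (U i)) ∧ (∀ x, ∃ i, x ∈ U i) ∧
    ∀ i, ∃ x₀ : X, ContinuousMap.Homotopic
      (⟨Subtype.val, continuous_subtype_val⟩ : C(U i, X))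
      (ContinuousMap.const _ x₀)

/-- The Lusternik–Schnirelmann category of a topological space. -/
noncomputable def topcat (X : Type*) [TopologicalSpace X] : ℕ :=
  sInf {n | TopCatCover X n}

/-!
Write a point `x` of `|K|` as the sum of the indicators of its superlevel sets `{v | s < x v}`,
`s ≥ 0`, each weighted by the length of the set of levels giving it (the layer-cake formula).
These layers form a chain of faces of `K`. For a subcomplex `L`, the points having a layer in `L`
form an open neighbourhood of `|L|`, and dropping the other layers and renormalising retracts it
onto `|L|` along straight segments inside `|K|`. Contiguous simplicial maps realise to maps joined
by straight segments inside `|K|` as well, so a categorical subcomplex has a neighbourhood that is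
contractible in `|K|`, and a cover of `K` by `n + 1` categorical subcomplexes yields such a cover
of `|K|` by open sets.
-/

open Finset MeasureTheory

theorem ContinuousMap.Homotopic.of_segment_subset {X E : Type*} [TopologicalSpace X]
    [AddCommGroup E] [TopologicalSpace E] [IsTopologicalAddGroup E] [Module ℝ E]
    [ContinuousSMul ℝ E] {s : Set E} {f g : C(X, s)}
    (h : ∀ x, segment ℝ (f x : E) (g x) ⊆ s) : f.Homotopic g := by
  let F := ContinuousMap.Homotopy.affine ⟨fun x => (f x : E), by fun_prop⟩
    ⟨fun x => (g x : E), by fun_prop⟩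
  exact ⟨{ toFun := fun p => ⟨F p, h p.2 (lineMap_mem_segment ℝ _ _ p.1.2)⟩
           continuous_toFun := F.continuous.subtype_mk _
           map_zero_left := fun x => Subtype.ext (F.apply_zero x)
           map_one_left := fun x => Subtype.ext (F.apply_one x) }⟩

theorem Continuous.finset_fold_max {X ι α : Type*} [TopologicalSpace X] [LinearOrder α]
    [TopologicalSpace α] [OrderClosedTopology α] (s : Finset ι) (b : α) {f : ι → X → α}
    (hf : ∀ i, Continuous (f i)) : Continuous fun x => s.fold max b (f · x) := by
  classical
  induction s using Finset.induction_on with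
  | empty => exact continuous_const
  | insert i s hi ih => simpa only [fold_insert hi] using (hf i).max ih

namespace AbsSC

section Simplicial

variable {V W : Type} [DecidableEq W]

theorem isSimplicial_id {L K : AbsSC W} (h : L.faces ⊆ K.faces) : IsSimplicial L K id :=
  fun σ hσ => by rw [image_id]; exact h hσ

theorem isSimplicial_const {L : AbsSC V} {K : AbsSC W} {w : W} (hw : {w} ∈ K.faces) :
    IsSimplicial L K fun _ => w :=
  fun σ hσ => by rw [image_const (L.nonempty_of_mem σ hσ)]; exact hw

end Simplicial

open scoped Classical

section Pushforward

variable {V W : Type} [Fintype V]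

noncomputable def supp (x : V → ℝ) : Finset V := univ.filter fun v => x v ≠ 0

@[simp]
theorem mem_supp {x : V → ℝ} {v : V} : v ∈ supp x ↔ x v ≠ 0 := by simp [supp]

theorem supp_nonempty_of_sum_eq_one {x : V → ℝ} (h : ∑ v, x v = 1) : (supp x).Nonempty := by
  by_contra hx
  rw [not_nonempty_iff_eq_empty, eq_empty_iff_forall_notMem] at hx
  simp_all

theorem supp_smul {c : ℝ} (hc : c ≠ 0) (x : V → ℝ) : supp (c • x) = supp x := by
  ext
  simp [hc]

variable [DecidableEq W]

noncomputable def pushforward (f : V → W) (x : V → ℝ) : W → ℝ :=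
  fun w => ∑ v with f v = w, x v

@[fun_prop]
theorem continuous_pushforward (f : V → W) : Continuous (pushforward f) := by
  unfold pushforward; fun_prop

theorem sum_pushforward [Fintype W] (f : V → W) (x : V → ℝ) :
    ∑ w, pushforward f x w = ∑ v, x v :=
  sum_fiberwise _ _ _

theorem pushforward_nonneg {f : V → W} {x : V → ℝ} (hx : ∀ v, 0 ≤ x v) (w : W) :
    0 ≤ pushforward f x w :=
  sum_nonneg fun v _ => hx v

theorem supp_pushforward [Fintype W] {f : V → W} {x : V → ℝ} (hx : ∀ v, 0 ≤ x v) :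
    supp (pushforward f x) = (supp x).image f := by
  ext w
  simp only [mem_supp, mem_image, pushforward, ne_eq,
    sum_eq_zero_iff_of_nonneg fun v _ => hx v, mem_filter, mem_univ, true_and]
  aesop

theorem pushforward_id [DecidableEq V] : pushforward (id : V → V) = id := by
  ext x v
  simp [pushforward, filter_eq']

theorem pushforward_const (w₀ : W) (x : V → ℝ) :
    pushforward (fun _ => w₀) x = Pi.single w₀ (∑ v, x v) := by
  ext w
  rcases eq_or_ne w w₀ with rfl | h
  · simp [pushforward]
  · simp [pushforward, h, h.symm]

end Pushforward

section Realization

variable {V W : Type} [Fintype V] [DecidableEq V] [Fintype W] [DecidableEq W]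

theorem mem_geomReal {K : AbsSC V} {x : V → ℝ} :
    x ∈ K.geomReal ↔ (∀ v, 0 ≤ x v) ∧ ∑ v, x v = 1 ∧ supp x ∈ K.faces := Iff.rfl

theorem segment_subset_geomReal {K : AbsSC V} {y z : V → ℝ} (hy : y ∈ K.geomReal)
    (hz : z ∈ K.geomReal) (h : supp y ∪ supp z ∈ K.faces) :
    segment ℝ y z ⊆ K.geomReal := by
  rintro _ ⟨a, b, ha, hb, hab, rfl⟩
  obtain ⟨hy0, hy1, -⟩ := hy
  obtain ⟨hz0, hz1, -⟩ := hz
  have hsum : ∑ v, (a • y + b • z) v = 1 := by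
    simp [sum_add_distrib, ← mul_sum, hy1, hz1, hab]
  refine ⟨fun v => ?_, hsum, K.down_closed _ h _ (fun v hv => ?_)
    (supp_nonempty_of_sum_eq_one hsum)⟩
  · simpa using add_nonneg (mul_nonneg ha (hy0 v)) (mul_nonneg hb (hz0 v))
  · contrapose! hv
    simp_all

theorem homotopic_of_supp_union_mem {X : Type*} [TopologicalSpace X] {K : AbsSC V}
    {f g : C(X, K.geomReal)}
    (h : ∀ x, supp (f x : V → ℝ) ∪ supp (g x : V → ℝ) ∈ K.faces) :
    f.Homotopic g :=
  .of_segment_subset fun x => segment_subset_geomReal (f x).2 (g x).2 (h x)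

theorem pushforward_mem_geomReal {L : AbsSC V} {K : AbsSC W} {f : V → W}
    (hf : IsSimplicial L K f) {x : V → ℝ} (hx : x ∈ L.geomReal) :
    pushforward f x ∈ K.geomReal := by
  obtain ⟨hx0, hx1, hxL⟩ := mem_geomReal.1 hx
  refine mem_geomReal.2 ⟨pushforward_nonneg hx0, by rw [sum_pushforward, hx1], ?_⟩
  rw [supp_pushforward hx0]
  exact hf _ hxL

noncomputable def realize {L : AbsSC V} {K : AbsSC W} (f : V → W) (hf : IsSimplicial L K f) :
    C(L.geomReal, K.geomReal) :=
  ⟨fun x => ⟨pushforward f x, pushforward_mem_geomReal hf x.2⟩, by fun_prop⟩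

theorem Contig.homotopic {L : AbsSC V} {K : AbsSC W} {f g : V → W} (h : Contig L K f g) :
    (realize f h.1).Homotopic (realize g h.2.1) :=
  homotopic_of_supp_union_mem fun x => by
    obtain ⟨hx0, -, hxL⟩ := mem_geomReal.1 x.2
    simp only [realize, ContinuousMap.coe_mk, supp_pushforward hx0]
    exact h.2.2 _ hxL

theorem ContigClass.homotopic {L : AbsSC V} {K : AbsSC W} {f g : V → W}
    (h : ContigClass L K f g) (hf : IsSimplicial L K f) (hg : IsSimplicial L K g) :
    (realize f hf).Homotopic (realize g hg) := by
  induction h with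
  | refl => exact .refl _
  | tail _ hcontig ih => exact (ih hcontig.1).trans hcontig.homotopic

theorem geomReal_mono {L K : AbsSC V} (h : L.faces ⊆ K.faces) : L.geomReal ⊆ K.geomReal :=
  fun _ hx => ⟨hx.1, hx.2.1, h hx.2.2⟩

theorem realize_id {L K : AbsSC V} (h : L.faces ⊆ K.faces) :
    realize id (isSimplicial_id h) = ContinuousMap.inclusion (geomReal_mono h) := by
  ext x : 2
  simp [realize, pushforward_id]
  rfl

noncomputable def vertex (K : AbsSC V) (v : V) (hv : {v} ∈ K.faces) : K.geomReal :=
  ⟨Pi.single v 1, mem_geomReal.2 ⟨fun w => by by_cases h : w = v <;> simp [h],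
    by simp, by convert hv; ext w; by_cases h : w = v <;> simp [h]⟩⟩

theorem realize_const {L : AbsSC V} {K : AbsSC W} {w : W} (hw : {w} ∈ K.faces) :
    realize (fun _ => w) (isSimplicial_const (L := L) hw) = .const _ (vertex K w hw) := by
  ext x : 2
  simp [realize, vertex, pushforward_const, (mem_geomReal.1 x.2).2.1]

theorem Categorical.exists_homotopic_const {K L : AbsSC V} (h : Categorical K L) :
    ∃ x₀, (ContinuousMap.inclusion (geomReal_mono h.1)).Homotopic (.const _ x₀) := by
  obtain ⟨hLK, v, hv, hid⟩ := h
  refine ⟨vertex K v hv, ?_⟩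
  rw [← realize_id hLK, ← realize_const hv]
  exact hid.homotopic _ _

end Realization

section Layers

variable {V : Type} [Fintype V] [DecidableEq V] {σ τ : Finset V} {x : V → ℝ}

noncomputable def superlevel (x : V → ℝ) (s : ℝ) : Finset V := univ.filter fun v => s < x v

def levels (x : V → ℝ) (σ : Finset V) : Set ℝ := {s | 0 ≤ s ∧ superlevel x s = σ}

/-- The length of the set of levels `s ≥ 0` at which the superlevel set of `x` is `σ`
(`layerWeight_eq_volume`), so that `x = ∑ σ, layerWeight σ x • 𝟙_σ` for `x ≥ 0`
(`sum_layerWeight`). -/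
noncomputable def layerWeight (σ : Finset V) (x : V → ℝ) : ℝ :=
  if hσ : σ.Nonempty then max (σ.inf' hσ x - σᶜ.fold max 0 x) 0 else 0

theorem levels_eq_Ico (hσ : σ.Nonempty) :
    levels x σ = Set.Ico (σᶜ.fold max 0 x) (σ.inf' hσ x) := by
  ext s
  simp only [levels, Set.mem_ofPred_eq, Set.mem_Ico, fold_max_le, lt_inf'_iff, Finset.ext_iff,
    superlevel, mem_filter, mem_univ, true_and, mem_compl]
  constructor
  · rintro ⟨hs, h⟩
    exact ⟨⟨hs, fun v hv => not_lt.1 fun hlt => hv ((h v).1 hlt)⟩, fun v hv => (h v).2 hv⟩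
  · rintro ⟨⟨hs, hout⟩, hin⟩
    exact ⟨hs, fun v => ⟨fun hlt => by_contra fun hv => (hout v hv).not_gt hlt, hin v⟩⟩

theorem layerWeight_eq_volume (hσ : σ.Nonempty) :
    layerWeight σ x = volume.real (levels x σ) := by
  rw [levels_eq_Ico hσ, Real.volume_real_Ico, layerWeight, dif_pos hσ]

theorem sum_layerWeight (hx : ∀ v, 0 ≤ x v) (v : V) :
    ∑ σ with v ∈ σ, layerWeight σ x = x v := by
  have hmeas (σ : Finset V) (hσ : σ ∈ univ.filter (v ∈ ·)) :
      MeasurableSet (levels x σ) := by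
    rw [levels_eq_Ico ⟨v, (mem_filter.1 hσ).2⟩]
    exact measurableSet_Ico
  have hfin (σ : Finset V) (hσ : σ ∈ univ.filter (v ∈ ·)) :
      volume (levels x σ) ≠ ⊤ := by
    rw [levels_eq_Ico ⟨v, (mem_filter.1 hσ).2⟩]
    exact measure_Ico_lt_top.ne
  have hdisj : Set.PairwiseDisjoint (univ.filter (v ∈ ·) : Finset (Finset V))
      fun σ => levels x σ :=
    fun σ _ τ _ hne => Set.disjoint_left.2 fun s hσ hτ => hne (hσ.2.symm.trans hτ.2)
  have hunion : (⋃ σ ∈ univ.filter (v ∈ ·), levels x σ) =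
      Set.Ico 0 (x v) := by
    ext s
    simp [levels, superlevel, and_comm]
  calc ∑ σ with v ∈ σ, layerWeight σ x
      = ∑ σ with v ∈ σ, volume.real (levels x σ) :=
        sum_congr rfl fun σ hσ => layerWeight_eq_volume ⟨v, (mem_filter.1 hσ).2⟩
    _ = volume.real (Set.Ico 0 (x v)) := by
        rw [← hunion, measureReal_biUnion_finset hdisj hmeas hfin]
    _ = x v := by rw [Real.volume_real_Ico_of_le (hx v), sub_zero]

theorem layerWeight_nonneg : 0 ≤ layerWeight σ x := by
  unfold layerWeight; split <;> simp

@[fun_prop]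
theorem continuous_layerWeight (σ : Finset V) : Continuous (layerWeight σ) := by
  unfold layerWeight
  split
  · exact ((Continuous.finset_inf'_apply _ fun v _ => continuous_apply v).sub
      (Continuous.finset_fold_max _ _ fun v => continuous_apply v)).max continuous_const
  · exact continuous_const

theorem exists_superlevel_eq_of_layerWeight_pos (h : 0 < layerWeight σ x) :
    ∃ s, 0 ≤ s ∧ superlevel x s = σ := by
  have hσ : σ.Nonempty := by
    by_contra hσ
    simp [layerWeight, hσ] at h
  rw [layerWeight_eq_volume hσ] at h
  exact nonempty_of_measureReal_ne_zero h.ne'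

theorem subset_supp_of_layerWeight_pos (h : 0 < layerWeight σ x) : σ ⊆ supp x := by
  obtain ⟨s, hs, rfl⟩ := exists_superlevel_eq_of_layerWeight_pos h
  intro v hv
  simp only [superlevel, mem_filter, mem_univ, true_and] at hv
  exact mem_supp.2 (by linarith)

theorem subset_or_subset_of_layerWeight_pos (hσ : 0 < layerWeight σ x)
    (hτ : 0 < layerWeight τ x) : σ ⊆ τ ∨ τ ⊆ σ := by
  obtain ⟨s, -, rfl⟩ := exists_superlevel_eq_of_layerWeight_pos hσ
  obtain ⟨t, -, rfl⟩ := exists_superlevel_eq_of_layerWeight_pos hτ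
  rcases le_total s t with hst | hts
  · exact Or.inr fun v hv => by simp_all [superlevel]; linarith
  · exact Or.inl fun v hv => by simp_all [superlevel]; linarith

variable (L : AbsSC V) in
noncomputable def layerPart (x : V → ℝ) (v : V) : ℝ :=
  ∑ σ with σ ∈ L.faces ∧ v ∈ σ, layerWeight σ x

variable {L : AbsSC V}

theorem layerPart_nonneg (v : V) : 0 ≤ layerPart L x v :=
  sum_nonneg fun _ _ => layerWeight_nonneg

theorem continuous_layerPart : Continuous (layerPart (V := V) L) :=
  continuous_pi fun _ => continuous_finsetSum _ fun σ _ => continuous_layerWeight σ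

theorem layerPart_eq_self (hx : ∀ v, 0 ≤ x v) (hL : supp x ∈ L.faces) :
    layerPart L x = x := by
  ext v
  rw [← sum_layerWeight hx v, layerPart]
  refine sum_subset (fun σ hσ => mem_filter.2 ⟨mem_univ _, (mem_filter.1 hσ).2.2⟩)
    fun σ hσ hσL => ?_
  refine le_antisymm (not_lt.1 fun hpos => hσL ?_) layerWeight_nonneg
  have hvσ : v ∈ σ := (mem_filter.1 hσ).2
  exact mem_filter.2 ⟨mem_univ _, L.down_closed _ hL _ (subset_supp_of_layerWeight_pos hpos)
    ⟨v, hvσ⟩, hvσ⟩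

theorem exists_layer_of_mem_supp_layerPart {v : V} (hv : v ∈ supp (layerPart L x)) :
    ∃ σ ∈ L.faces, v ∈ σ ∧ 0 < layerWeight σ x := by
  rw [mem_supp, layerPart] at hv
  obtain ⟨σ, hσ, hpos⟩ := exists_ne_zero_of_sum_ne_zero hv
  obtain ⟨-, hσL, hvσ⟩ := mem_filter.1 hσ
  exact ⟨σ, hσL, hvσ, lt_of_le_of_ne layerWeight_nonneg (Ne.symm hpos)⟩

theorem supp_layerPart_subset : supp (layerPart L x) ⊆ supp x := by
  intro v hv
  obtain ⟨σ, -, hvσ, hpos⟩ := exists_layer_of_mem_supp_layerPart hv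
  exact subset_supp_of_layerWeight_pos hpos hvσ

theorem supp_layerPart_mem (hne : (supp (layerPart L x)).Nonempty) :
    supp (layerPart L x) ∈ L.faces := by
  let A := univ.filter fun σ => σ ∈ L.faces ∧ 0 < layerWeight σ x
  have hA : A.Nonempty := by
    obtain ⟨v, hv⟩ := hne
    obtain ⟨σ, hσL, -, hpos⟩ := exists_layer_of_mem_supp_layerPart hv
    exact ⟨σ, mem_filter.2 ⟨mem_univ _, hσL, hpos⟩⟩
  obtain ⟨σ₀, hσ₀, hmax⟩ := exists_max_image A card hA
  have htop (τ) (hτ : τ ∈ A) : τ ⊆ σ₀ := by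
    rcases subset_or_subset_of_layerWeight_pos (mem_filter.1 hτ).2.2 (mem_filter.1 hσ₀).2.2
      with h | h
    · exact h
    · exact (eq_of_subset_of_card_le h (hmax τ hτ)).ge
  refine L.down_closed σ₀ (mem_filter.1 hσ₀).2.1 _ (fun v hv => ?_) hne
  obtain ⟨σ, hσL, hvσ, hpos⟩ := exists_layer_of_mem_supp_layerPart hv
  exact htop σ (mem_filter.2 ⟨mem_univ _, hσL, hpos⟩) hvσ

end Layers

section Neighbourhood

variable {V : Type} [Fintype V] [DecidableEq V] {K L : AbsSC V}

variable (K L) in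
/-- The points of `|K|` one of whose layers is a face of `L`. -/
def layerNbhd : Set K.geomReal := {x | 0 < ∑ v, layerPart L x v}

theorem isOpen_layerNbhd : IsOpen (layerNbhd K L) :=
  isOpen_lt continuous_const (by unfold layerPart; fun_prop)

theorem mem_layerNbhd {x : K.geomReal} (hx : supp (x : V → ℝ) ∈ L.faces) :
    x ∈ layerNbhd K L := by
  obtain ⟨hx0, hx1, -⟩ := mem_geomReal.1 x.2
  show 0 < ∑ v, layerPart L x v
  rw [layerPart_eq_self hx0 hx, hx1]
  exact one_pos

theorem normalize_layerPart_mem_geomReal (x : layerNbhd K L) :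
    (∑ v, layerPart L x v)⁻¹ • layerPart L x ∈ L.geomReal := by
  have hpos : 0 < ∑ v, layerPart L x v := x.2
  refine mem_geomReal.2 ⟨fun v => ?_, ?_, ?_⟩
  · exact smul_nonneg (inv_nonneg.2 hpos.le) (layerPart_nonneg v)
  · simp [← mul_sum, hpos.ne']
  · obtain ⟨v, -, hv⟩ := exists_ne_zero_of_sum_ne_zero hpos.ne'
    rw [supp_smul (inv_ne_zero hpos.ne')]
    exact supp_layerPart_mem ⟨v, mem_supp.2 hv⟩

variable (K L) in
noncomputable def layerRetraction : C(layerNbhd K L, L.geomReal) where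
  toFun x := ⟨_, normalize_layerPart_mem_geomReal x⟩
  continuous_toFun := by
    have hmass : Continuous fun x : layerNbhd K L => ∑ v, layerPart L x v := by
      unfold layerPart; fun_prop
    exact ((hmass.inv₀ fun x => x.2.ne').smul
      (continuous_layerPart.comp (by fun_prop))).subtype_mk _

theorem homotopic_inclusion_layerRetraction (hLK : L.faces ⊆ K.faces) :
    (⟨Subtype.val, continuous_subtype_val⟩ : C(layerNbhd K L, K.geomReal)).Homotopic
      ((ContinuousMap.inclusion (geomReal_mono hLK)).comp (layerRetraction K L)) := by
  refine homotopic_of_supp_union_mem fun x => ?_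
  have hpos : 0 < ∑ v, layerPart L x v := x.2
  have hsub : supp ((∑ v, layerPart L x v)⁻¹ • layerPart L x) ⊆ supp (x : V → ℝ) := by
    rw [supp_smul (inv_ne_zero hpos.ne')]
    exact supp_layerPart_subset
  change supp (x : V → ℝ) ∪ supp ((∑ v, layerPart L x v)⁻¹ • layerPart L x) ∈ K.faces
  rw [union_eq_left.2 hsub]
  exact (mem_geomReal.1 (x : K.geomReal).2).2.2

theorem Categorical.exists_homotopic_const_layerNbhd (h : Categorical K L) :
    ∃ x₀, (⟨Subtype.val, continuous_subtype_val⟩ : C(layerNbhd K L, K.geomReal)).Homotopic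
      (.const _ x₀) := by
  obtain ⟨x₀, hx₀⟩ := h.exists_homotopic_const
  refine ⟨x₀, (homotopic_inclusion_layerRetraction h.1).trans ?_⟩
  simpa using hx₀.comp (.refl (layerRetraction K L))

end Neighbourhood

section Simplex

variable {V : Type} [DecidableEq V] {K : AbsSC V}

def simplex (σ : Finset V) : AbsSC V where
  faces := {τ | τ ⊆ σ ∧ τ.Nonempty}
  nonempty_of_mem _ h := h.2
  down_closed _ h _ hρ hne := ⟨hρ.trans h.1, hne⟩

theorem categorical_simplex {σ : Finset V} (hσ : σ ∈ K.faces) :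
    Categorical K (simplex σ) := by
  have hsub : (simplex σ).faces ⊆ K.faces := fun τ h => K.down_closed σ hσ τ h.1 h.2
  obtain ⟨v, hvσ⟩ := K.nonempty_of_mem σ hσ
  have hv : {v} ∈ K.faces :=
    K.down_closed σ hσ {v} (singleton_subset_iff.2 hvσ) (singleton_nonempty v)
  refine ⟨hsub, v, hv,
    .single ⟨isSimplicial_id hsub, isSimplicial_const hv, fun τ hτ => ?_⟩⟩
  rw [image_id, image_const hτ.2]
  exact K.down_closed σ hσ _ (union_subset hτ.1 (singleton_subset_iff.2 hvσ))
    (hτ.2.mono subset_union_left)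

theorem exists_catCover [Finite V] (hK : K.faces.Nonempty) : ∃ n, CatCover K n := by
  obtain ⟨σ₀, hσ₀⟩ := hK
  let e := Finite.equivFin K.faces
  let face : Fin (Nat.card K.faces + 1) → K.faces := Fin.cons ⟨σ₀, hσ₀⟩ e.symm
  refine ⟨_, fun i => simplex (face i), fun i => categorical_simplex (face i).2,
    fun σ hσ => ⟨(e ⟨σ, hσ⟩).succ, ?_⟩⟩
  simp only [face, Fin.cons_succ, Equiv.symm_apply_apply]
  exact ⟨subset_rfl, K.nonempty_of_mem σ hσ⟩

end Simplex

theorem CatCover.topCatCover {V : Type} [Fintype V] [DecidableEq V] {K : AbsSC V} {n : ℕ}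
    (h : CatCover K n) : TopCatCover K.geomReal n := by
  obtain ⟨U, hcat, hcover⟩ := h
  refine ⟨fun i => layerNbhd K (U i), fun i => isOpen_layerNbhd, fun x => ?_,
    fun i => (hcat i).exists_homotopic_const_layerNbhd⟩
  obtain ⟨i, hi⟩ := hcover _ (mem_geomReal.1 x.2).2.2
  exact ⟨i, mem_layerNbhd hi⟩

end AbsSC

theorem TopCatCover.nonempty {X : Type*} [TopologicalSpace X] {n : ℕ} (h : TopCatCover X n) :
    Nonempty X :=
  let ⟨_, _, _, hcontr⟩ := h
  ⟨(hcontr 0).choose⟩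

/-- `cat |K| ≤ scat K`. -/
theorem topcat_geomReal_le_scat {V : Type} [DecidableEq V] [Fintype V]
    (K : AbsSC V) : topcat (AbsSC.geomReal K) ≤ AbsSC.scat K := by
  by_cases hK : K.faces.Nonempty
  · obtain ⟨n, hn⟩ := AbsSC.exists_catCover hK
    have hscat : AbsSC.CatCover K K.scat := Nat.sInf_mem (s := {n | K.CatCover n}) ⟨n, hn⟩
    exact Nat.sInf_le hscat.topCatCover
  · have hnone (n : ℕ) : ¬ TopCatCover K.geomReal n := fun h =>
      have ⟨x⟩ := h.nonempty
      hK ⟨_, (AbsSC.mem_geomReal.1 x.2).2.2⟩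
    simp [topcat, hnone]
end

section
/- For finite simplicial complexes K and L, gscat(K ∗ L) ≤ min{gscat K, gscat L}, where K ∗ L is the simplicial join. -/
namespace AbsSC

section Aux

variable {V W : Type} [DecidableEq V] [DecidableEq W]

theorem ext' {K L : AbsSC V} (h : K.faces = L.faces) : K = L := by
  cases K; cases L; simp_all

lemma mem_sumLeft {σ : Finset (V ⊕ W)} {a : V} :
    a ∈ sumLeft σ ↔ Sum.inl a ∈ σ := Finset.mem_preimage

lemma mem_sumRight {σ : Finset (V ⊕ W)} {b : W} :
    b ∈ sumRight σ ↔ Sum.inr b ∈ σ := Finset.mem_preimage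

lemma mem_join {K : AbsSC V} {L : AbsSC W} {σ : Finset (V ⊕ W)} :
    σ ∈ (K.join L).faces ↔ σ.Nonempty ∧ ((sumLeft σ).Nonempty → sumLeft σ ∈ K.faces) ∧
      ((sumRight σ).Nonempty → sumRight σ ∈ L.faces) := Iff.rfl

lemma mem_delete {K : AbsSC V} {v : V} {σ : Finset V} :
    σ ∈ (K.delete v).faces ↔ σ ∈ K.faces ∧ v ∉ σ := Iff.rfl

lemma sumLeft_singleton_inl (v : V) :
    sumLeft ({Sum.inl v} : Finset (V ⊕ W)) = {v} := by
  ext a; simp [mem_sumLeft]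

lemma sumRight_singleton_inl (v : V) :
    sumRight ({Sum.inl v} : Finset (V ⊕ W)) = ∅ := by
  ext b; simp [mem_sumRight]

lemma sumLeft_singleton_inr (w : W) :
    sumLeft ({Sum.inr w} : Finset (V ⊕ W)) = ∅ := by
  ext a; simp [mem_sumLeft]

lemma sumRight_singleton_inr (w : W) :
    sumRight ({Sum.inr w} : Finset (V ⊕ W)) = {w} := by
  ext b; simp [mem_sumRight]

lemma singleton_inl_mem_join {K : AbsSC V} {L : AbsSC W} {v : V} (hv : {v} ∈ K.faces) :
    ({Sum.inl v} : Finset (V ⊕ W)) ∈ (K.join L).faces := by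
  refine ⟨Finset.singleton_nonempty _, ?_, ?_⟩
  · intro _; rw [sumLeft_singleton_inl]; exact hv
  · intro h
    rw [sumRight_singleton_inl] at h
    exact absurd h (by simp)

lemma singleton_inr_mem_join {K : AbsSC V} {L : AbsSC W} {w : W} (hw : {w} ∈ L.faces) :
    ({Sum.inr w} : Finset (V ⊕ W)) ∈ (K.join L).faces := by
  refine ⟨Finset.singleton_nonempty _, ?_, ?_⟩
  · intro h
    rw [sumLeft_singleton_inr] at h
    exact absurd h (by simp)
  · intro _; rw [sumRight_singleton_inr]; exact hw

lemma sumLeft_union_image_inl (σ : Finset (V ⊕ W)) (τ : Finset V) :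
    sumLeft (σ ∪ τ.image Sum.inl) = sumLeft σ ∪ τ := by
  ext a; simp [mem_sumLeft]

lemma sumRight_union_image_inl (σ : Finset (V ⊕ W)) (τ : Finset V) :
    sumRight (σ ∪ τ.image Sum.inl) = sumRight σ := by
  ext b; simp [mem_sumRight]

lemma sumLeft_union_image_inr (σ : Finset (V ⊕ W)) (τ : Finset W) :
    sumLeft (σ ∪ τ.image Sum.inr) = sumLeft σ := by
  ext a; simp [mem_sumLeft]

lemma sumRight_union_image_inr (σ : Finset (V ⊕ W)) (τ : Finset W) :
    sumRight (σ ∪ τ.image Sum.inr) = sumRight σ ∪ τ := by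
  ext b; simp [mem_sumRight]

/-- The left part of a maximal face of the join is maximal. -/
lemma maximal_sumLeft {K : AbsSC V} {L : AbsSC W} {σ : Finset (V ⊕ W)}
    (hmax : MaximalFace (K.join L) σ) (hne : (sumLeft σ).Nonempty) :
    MaximalFace K (sumLeft σ) := by
  refine ⟨hmax.1.2.1 hne, fun τ hτ hsub => ?_⟩
  have hσ' : σ ∪ τ.image Sum.inl ∈ (K.join L).faces := by
    refine ⟨hmax.1.1.mono Finset.subset_union_left, ?_, ?_⟩
    · intro _
      rw [sumLeft_union_image_inl, Finset.union_eq_right.2 hsub]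
      exact hτ
    · rw [sumRight_union_image_inl]; exact hmax.1.2.2
  have heq := hmax.2 _ hσ' Finset.subset_union_left
  refine Finset.Subset.antisymm hsub fun a ha => ?_
  have : Sum.inl a ∈ σ := by
    rw [heq]; exact Finset.mem_union_right _ (Finset.mem_image_of_mem _ ha)
  exact mem_sumLeft.2 this

lemma maximal_sumRight {K : AbsSC V} {L : AbsSC W} {σ : Finset (V ⊕ W)}
    (hmax : MaximalFace (K.join L) σ) (hne : (sumRight σ).Nonempty) :
    MaximalFace L (sumRight σ) := by
  refine ⟨hmax.1.2.2 hne, fun τ hτ hsub => ?_⟩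
  have hσ' : σ ∪ τ.image Sum.inr ∈ (K.join L).faces := by
    refine ⟨hmax.1.1.mono Finset.subset_union_left, ?_, ?_⟩
    · rw [sumLeft_union_image_inr]; exact hmax.1.2.1
    · intro _
      rw [sumRight_union_image_inr, Finset.union_eq_right.2 hsub]
      exact hτ
  have heq := hmax.2 _ hσ' Finset.subset_union_left
  refine Finset.Subset.antisymm hsub fun b hb => ?_
  have : Sum.inr b ∈ σ := by
    rw [heq]; exact Finset.mem_union_right _ (Finset.mem_image_of_mem _ hb)
  exact mem_sumRight.2 this

lemma join_delete_inl (K : AbsSC V) (L : AbsSC W) (v : V) :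
    (K.join L).delete (Sum.inl v) = (K.delete v).join L := by
  apply ext'
  ext σ
  constructor
  · rintro ⟨⟨h1, h2, h3⟩, h4⟩
    exact ⟨h1, fun hn => ⟨h2 hn, fun hv => h4 (mem_sumLeft.1 hv)⟩, h3⟩
  · rintro ⟨h1, h2, h3⟩
    refine ⟨⟨h1, fun hn => (h2 hn).1, h3⟩, fun hv => ?_⟩
    have hv' : v ∈ sumLeft σ := mem_sumLeft.2 hv
    exact (h2 ⟨v, hv'⟩).2 hv'

lemma join_delete_inr (K : AbsSC V) (L : AbsSC W) (w : W) :
    (K.join L).delete (Sum.inr w) = K.join (L.delete w) := by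
  apply ext'
  ext σ
  constructor
  · rintro ⟨⟨h1, h2, h3⟩, h4⟩
    exact ⟨h1, h2, fun hn => ⟨h3 hn, fun hw => h4 (mem_sumRight.1 hw)⟩⟩
  · rintro ⟨h1, h2, h3⟩
    refine ⟨⟨h1, h2, fun hn => (h3 hn).1⟩, fun hw => ?_⟩
    have hw' : w ∈ sumRight σ := mem_sumRight.2 hw
    exact (h3 ⟨w, hw'⟩).2 hw'

lemma esc_join_left {K K₂ : AbsSC V} (L : AbsSC W) (h : ElemStrongCollapse K K₂) :
    ElemStrongCollapse (K.join L) (K₂.join L) := by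
  obtain ⟨v, ⟨v', hne, hv, hv', hdom⟩, rfl⟩ := h
  refine ⟨Sum.inl v, ⟨Sum.inl v', by simp [hne], singleton_inl_mem_join hv,
    singleton_inl_mem_join hv', ?_⟩, (join_delete_inl K L v).symm⟩
  intro σ hmax hvσ
  have hne' : (sumLeft σ).Nonempty := ⟨v, mem_sumLeft.2 hvσ⟩
  exact mem_sumLeft.1 (hdom _ (maximal_sumLeft hmax hne') (mem_sumLeft.2 hvσ))

lemma esc_join_right {L L₂ : AbsSC W} (K : AbsSC V) (h : ElemStrongCollapse L L₂) :
    ElemStrongCollapse (K.join L) (K.join L₂) := by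
  obtain ⟨w, ⟨w', hne, hw, hw', hdom⟩, rfl⟩ := h
  refine ⟨Sum.inr w, ⟨Sum.inr w', by simp [hne], singleton_inr_mem_join hw,
    singleton_inr_mem_join hw', ?_⟩, (join_delete_inr K L w).symm⟩
  intro σ hmax hwσ
  have hne' : (sumRight σ).Nonempty := ⟨w, mem_sumRight.2 hwσ⟩
  exact mem_sumRight.1 (hdom _ (maximal_sumRight hmax hne') (mem_sumRight.2 hwσ))

lemma rtg_join_left {K M : AbsSC V} (L : AbsSC W)
    (h : Relation.ReflTransGen ElemStrongCollapse K M) :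
    Relation.ReflTransGen ElemStrongCollapse (K.join L) (M.join L) := by
  induction h with
  | refl => exact .refl
  | tail _ hstep ih => exact ih.tail (esc_join_left L hstep)

lemma rtg_join_right {L M : AbsSC W} (K : AbsSC V)
    (h : Relation.ReflTransGen ElemStrongCollapse L M) :
    Relation.ReflTransGen ElemStrongCollapse (K.join L) (K.join M) := by
  induction h with
  | refl => exact .refl
  | tail _ hstep ih => exact ih.tail (esc_join_right K hstep)

lemma faces_empty_of_no_vertex {K : AbsSC V} (h : ∀ v : V, {v} ∉ K.faces) :
    K.faces = ∅ := by
  ext σ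
  simp only [Set.mem_empty_iff_false, iff_false]
  intro hσ
  obtain ⟨x, hx⟩ := K.nonempty_of_mem σ hσ
  exact h x (K.down_closed σ hσ {x} (Finset.singleton_subset_iff.2 hx)
    (Finset.singleton_nonempty _))

/-- If `L` has no faces, then `P ∗ L` is a point when `P` is. -/
lemma isPoint_join_of_empty_right {P : AbsSC V} {L : AbsSC W} {v : V}
    (hP : P.faces = {{v}}) (hL : L.faces = ∅) : IsPoint (P.join L) := by
  refine ⟨Sum.inl v, ?_⟩
  ext σ
  constructor
  · rintro ⟨h1, h2, h3⟩
    have hR : sumRight σ = ∅ := by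
      by_contra h
      have := h3 (Finset.nonempty_iff_ne_empty.2 h)
      rw [hL] at this; exact this
    have hsub : σ ⊆ {Sum.inl v} := by
      intro x hx
      cases x with
      | inl a =>
        have haL : a ∈ sumLeft σ := mem_sumLeft.2 hx
        have := h2 ⟨a, haL⟩
        rw [hP] at this
        simp only [Set.mem_singleton_iff] at this
        rw [this] at haL
        simp only [Finset.mem_singleton] at haL
        simp [haL]
      | inr b =>
        have : b ∈ sumRight σ := mem_sumRight.2 hx
        rw [hR] at this; simp at this
    have := Finset.Nonempty.mono hsub h1  -- unused; just ensure nonempty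
    simp only [Set.mem_singleton_iff]
    exact Finset.Subset.antisymm hsub (by
      obtain ⟨x, hx⟩ := h1
      have hxv := hsub hx
      simp only [Finset.mem_singleton] at hxv
      subst hxv
      exact Finset.singleton_subset_iff.2 hx)
  · rintro rfl
    exact singleton_inl_mem_join (by rw [hP]; rfl)

lemma isPoint_join_of_empty_left {P : AbsSC W} {K : AbsSC V} {v : W}
    (hP : P.faces = {{v}}) (hK : K.faces = ∅) : IsPoint (K.join P) := by
  refine ⟨Sum.inr v, ?_⟩
  ext σ
  constructor
  · rintro ⟨h1, h2, h3⟩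
    have hR : sumLeft σ = ∅ := by
      by_contra h
      have := h2 (Finset.nonempty_iff_ne_empty.2 h)
      rw [hK] at this; exact this
    have hsub : σ ⊆ {Sum.inr v} := by
      intro x hx
      cases x with
      | inr a =>
        have haL : a ∈ sumRight σ := mem_sumRight.2 hx
        have := h3 ⟨a, haL⟩
        rw [hP] at this
        simp only [Set.mem_singleton_iff] at this
        rw [this] at haL
        simp only [Finset.mem_singleton] at haL
        simp [haL]
      | inl b =>
        have : b ∈ sumLeft σ := mem_sumLeft.2 hx
        rw [hR] at this; simp at this
    simp only [Set.mem_singleton_iff]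
    exact Finset.Subset.antisymm hsub (by
      obtain ⟨x, hx⟩ := h1
      have hxv := hsub hx
      simp only [Finset.mem_singleton] at hxv
      subst hxv
      exact Finset.singleton_subset_iff.2 hx)
  · rintro rfl
    exact singleton_inr_mem_join (by rw [hP]; rfl)

lemma isPoint_join_left [Fintype W] {P : AbsSC V} (hP : IsPoint P) (L : AbsSC W) :
    StronglyCollapsible (P.join L) := by
  classical
  obtain ⟨v, hv⟩ := hP
  suffices H : ∀ n (L : AbsSC W), (Finset.univ.filter fun w => {w} ∈ L.faces).card ≤ n →
      StronglyCollapsible (P.join L) from H _ L le_rfl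
  intro n
  induction n with
  | zero =>
    intro L hL
    have : ∀ w : W, {w} ∉ L.faces := by
      intro w hw
      have : w ∈ Finset.univ.filter fun w => {w} ∈ L.faces := by simp [hw]
      have := Finset.card_pos.2 ⟨w, this⟩
      omega
    exact ⟨P.join L, .refl, isPoint_join_of_empty_right hv (faces_empty_of_no_vertex this)⟩
  | succ n ih =>
    intro L hL
    by_cases hw : ∃ w, {w} ∈ L.faces
    · obtain ⟨w, hwL⟩ := hw
      have hdom : Dominated (P.join L) (Sum.inr w) := by
        refine ⟨Sum.inl v, by simp, singleton_inr_mem_join hwL,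
          singleton_inl_mem_join (by rw [hv]; rfl), ?_⟩
        intro σ hmax hwσ
        by_contra hvσ
        have hσ' : insert (Sum.inl v) σ ∈ (P.join L).faces := by
          refine ⟨Finset.insert_nonempty _ _, ?_, ?_⟩
          · intro _
            have hL1 : sumLeft (insert (Sum.inl v) σ) = insert v (sumLeft σ) := by
              ext a; simp [mem_sumLeft]
            have hsub : sumLeft σ ⊆ {v} := by
              intro a ha
              rcases (sumLeft σ).eq_empty_or_nonempty with he | hne
              · rw [he] at ha; simp at ha
              · have := hmax.1.2.1 hne
                rw [hv] at this
                simp only [Set.mem_singleton_iff] at this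
                rw [this] at ha; exact ha
            rw [hL1, hv]
            simp only [Set.mem_singleton_iff]
            apply Finset.Subset.antisymm
            · exact Finset.insert_subset_iff.2 ⟨Finset.mem_singleton_self v, hsub⟩
            · exact Finset.singleton_subset_iff.2 (Finset.mem_insert_self _ _)
          · have hR : sumRight (insert (Sum.inl v) σ) = sumRight σ := by
              ext b; simp [mem_sumRight]
            rw [hR]; exact hmax.1.2.2
        have := hmax.2 _ hσ' (Finset.subset_insert _ _)
        exact hvσ (this ▸ Finset.mem_insert_self _ _)
      have hstep : ElemStrongCollapse (P.join L) (P.join (L.delete w)) :=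
        ⟨Sum.inr w, hdom, (join_delete_inr P L w).symm⟩
      have hcard : (Finset.univ.filter fun w' => {w'} ∈ (L.delete w).faces).card ≤ n := by
        have hsub : (Finset.univ.filter fun w' => {w'} ∈ (L.delete w).faces) ⊆
            (Finset.univ.filter fun w' => {w'} ∈ L.faces).erase w := by
          intro w' hw'
          simp only [Finset.mem_filter, Finset.mem_univ, true_and] at hw'
          have hne : w' ≠ w := by
            intro h; subst h; exact hw'.2 (Finset.mem_singleton_self _)
          simp only [Finset.mem_erase, Finset.mem_filter, Finset.mem_univ, true_and]
          exact ⟨hne, hw'.1⟩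
        have hwmem : w ∈ Finset.univ.filter fun w' => {w'} ∈ L.faces := by simp [hwL]
        have := Finset.card_le_card hsub
        rw [Finset.card_erase_of_mem hwmem] at this
        omega
      obtain ⟨M, hM1, hM2⟩ := ih (L.delete w) hcard
      exact ⟨M, Relation.ReflTransGen.head hstep hM1, hM2⟩
    · push_neg at hw
      exact ⟨P.join L, .refl, isPoint_join_of_empty_right hv (faces_empty_of_no_vertex hw)⟩

lemma isPoint_join_right [Fintype V] {P : AbsSC W} (hP : IsPoint P) (K : AbsSC V) :
    StronglyCollapsible (K.join P) := by
  classical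
  obtain ⟨v, hv⟩ := hP
  suffices H : ∀ n (K : AbsSC V), (Finset.univ.filter fun u => {u} ∈ K.faces).card ≤ n →
      StronglyCollapsible (K.join P) from H _ K le_rfl
  intro n
  induction n with
  | zero =>
    intro K hK
    have : ∀ u : V, {u} ∉ K.faces := by
      intro u hu
      have : u ∈ Finset.univ.filter fun u => {u} ∈ K.faces := by simp [hu]
      have := Finset.card_pos.2 ⟨u, this⟩
      omega
    exact ⟨K.join P, .refl, isPoint_join_of_empty_left hv (faces_empty_of_no_vertex this)⟩
  | succ n ih =>
    intro K hK
    by_cases hu : ∃ u, {u} ∈ K.faces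
    · obtain ⟨u, huK⟩ := hu
      have hdom : Dominated (K.join P) (Sum.inl u) := by
        refine ⟨Sum.inr v, by simp, singleton_inl_mem_join huK,
          singleton_inr_mem_join (by rw [hv]; rfl), ?_⟩
        intro σ hmax huσ
        by_contra hvσ
        have hσ' : insert (Sum.inr v) σ ∈ (K.join P).faces := by
          refine ⟨Finset.insert_nonempty _ _, ?_, ?_⟩
          · have hLl : sumLeft (insert (Sum.inr v) σ) = sumLeft σ := by
              ext a; simp [mem_sumLeft]
            rw [hLl]; exact hmax.1.2.1
          · intro _
            have hL1 : sumRight (insert (Sum.inr v) σ) = insert v (sumRight σ) := by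
              ext a; simp [mem_sumRight]
            have hsub : sumRight σ ⊆ {v} := by
              intro a ha
              rcases (sumRight σ).eq_empty_or_nonempty with he | hne
              · rw [he] at ha; simp at ha
              · have := hmax.1.2.2 hne
                rw [hv] at this
                simp only [Set.mem_singleton_iff] at this
                rw [this] at ha; exact ha
            rw [hL1, hv]
            simp only [Set.mem_singleton_iff]
            apply Finset.Subset.antisymm
            · exact Finset.insert_subset_iff.2 ⟨Finset.mem_singleton_self v, hsub⟩
            · exact Finset.singleton_subset_iff.2 (Finset.mem_insert_self _ _)
        have := hmax.2 _ hσ' (Finset.subset_insert _ _)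
        exact hvσ (this ▸ Finset.mem_insert_self _ _)
      have hstep : ElemStrongCollapse (K.join P) ((K.delete u).join P) :=
        ⟨Sum.inl u, hdom, (join_delete_inl K P u).symm⟩
      have hcard : (Finset.univ.filter fun u' => {u'} ∈ (K.delete u).faces).card ≤ n := by
        have hsub : (Finset.univ.filter fun u' => {u'} ∈ (K.delete u).faces) ⊆
            (Finset.univ.filter fun u' => {u'} ∈ K.faces).erase u := by
          intro u' hu'
          simp only [Finset.mem_filter, Finset.mem_univ, true_and] at hu'
          have hne : u' ≠ u := by
            intro h; subst h; exact hu'.2 (Finset.mem_singleton_self _)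
          simp only [Finset.mem_erase, Finset.mem_filter, Finset.mem_univ, true_and]
          exact ⟨hne, hu'.1⟩
        have humem : u ∈ Finset.univ.filter fun u' => {u'} ∈ K.faces := by simp [huK]
        have := Finset.card_le_card hsub
        rw [Finset.card_erase_of_mem humem] at this
        omega
      obtain ⟨M, hM1, hM2⟩ := ih (K.delete u) hcard
      exact ⟨M, Relation.ReflTransGen.head hstep hM1, hM2⟩
    · push_neg at hu
      exact ⟨K.join P, .refl, isPoint_join_of_empty_left hv (faces_empty_of_no_vertex hu)⟩

lemma sc_join_left [Fintype W] {K : AbsSC V} (L : AbsSC W) (h : StronglyCollapsible K) :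
    StronglyCollapsible (K.join L) := by
  obtain ⟨M, hchain, hpt⟩ := h
  obtain ⟨M', h1, h2⟩ := isPoint_join_left hpt L
  exact ⟨M', (rtg_join_left L hchain).trans h1, h2⟩

lemma sc_join_right [Fintype V] {L : AbsSC W} (K : AbsSC V) (h : StronglyCollapsible L) :
    StronglyCollapsible (K.join L) := by
  obtain ⟨M, hchain, hpt⟩ := h
  obtain ⟨M', h1, h2⟩ := isPoint_join_right hpt K
  exact ⟨M', (rtg_join_right K hchain).trans h1, h2⟩

/-- The full simplex on a vertex set. -/
def simplexC (σ : Finset V) : AbsSC V where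
  faces := {τ | τ ⊆ σ ∧ τ.Nonempty}
  nonempty_of_mem := fun _ h => h.2
  down_closed := fun _ h ρ hρ hne => ⟨hρ.trans h.1, hne⟩

lemma simplexC_sc (σ : Finset V) (hσ : σ.Nonempty) : StronglyCollapsible (simplexC σ) := by
  classical
  suffices H : ∀ n (σ : Finset V), σ.card = n → σ.Nonempty →
      StronglyCollapsible (simplexC σ) from H _ σ rfl hσ
  intro n
  induction n using Nat.strong_induction_on with
  | _ n ih =>
  intro σ hn hσ
  rcases Nat.lt_or_ge 1 σ.card with h2 | h1
  · obtain ⟨v, hv, v', hv', hvv'⟩ := Finset.one_lt_card.1 h2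
    have hdom : Dominated (simplexC σ) v := by
      refine ⟨v', Ne.symm hvv', ⟨Finset.singleton_subset_iff.2 hv, Finset.singleton_nonempty _⟩,
        ⟨Finset.singleton_subset_iff.2 hv', Finset.singleton_nonempty _⟩, ?_⟩
      intro τ hmax _
      have : τ = σ := hmax.2 σ ⟨subset_rfl, hσ⟩ hmax.1.1
      rw [this]; exact hv'
    have heq : (simplexC σ).delete v = simplexC (σ.erase v) := by
      apply ext'
      ext τ
      constructor
      · rintro ⟨⟨h1, h2⟩, h3⟩
        exact ⟨Finset.subset_erase.2 ⟨h1, h3⟩, h2⟩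
      · rintro ⟨h1, h2⟩
        obtain ⟨hs, hv⟩ := Finset.subset_erase.1 h1
        exact ⟨⟨hs, h2⟩, hv⟩
    have hcard : (σ.erase v).card < n := by
      rw [Finset.card_erase_of_mem hv]; omega

    have hene : (σ.erase v).Nonempty := by
      refine ⟨v', Finset.mem_erase.2 ⟨Ne.symm hvv', hv'⟩⟩
    obtain ⟨M, hM1, hM2⟩ := ih _ hcard _ rfl hene
    refine ⟨M, Relation.ReflTransGen.head ⟨v, hdom, by rw [heq]⟩ hM1, hM2⟩
  · obtain ⟨v, hv⟩ := Finset.card_eq_one.1 (le_antisymm h1 (Finset.card_pos.2 hσ))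
    refine ⟨simplexC σ, .refl, v, ?_⟩
    ext τ
    constructor
    · rintro ⟨h1, h2⟩
      subst hv
      simp only [Set.mem_singleton_iff]
      rcases Finset.subset_singleton_iff.1 h1 with he | he
      · rw [he] at h2; simp at h2
      · exact he
    · rintro rfl
      exact ⟨by rw [hv], Finset.singleton_nonempty _⟩

lemma gcatCover_exists [Fintype V] (K : AbsSC V) (hK : K.faces.Nonempty) :
    ∃ n, GCatCover K n := by
  classical
  have hfin : K.faces.Finite := Set.toFinite _
  have hFne : hfin.toFinset.Nonempty := by
    obtain ⟨σ, hσ⟩ := hK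
    exact ⟨σ, hfin.mem_toFinset.2 hσ⟩
  have hcard : hfin.toFinset.card - 1 + 1 = hfin.toFinset.card :=
    Nat.succ_pred_eq_of_pos (Finset.card_pos.2 hFne)
  let e : Fin (hfin.toFinset.card - 1 + 1) ≃ hfin.toFinset :=
    (finCongr hcard).trans hfin.toFinset.equivFin.symm
  refine ⟨hfin.toFinset.card - 1, fun i => simplexC ((e i : hfin.toFinset) : Finset V), ?_, ?_⟩
  · intro i
    have hσ₀K : ((e i : hfin.toFinset) : Finset V) ∈ K.faces :=
      hfin.mem_toFinset.1 (e i).2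
    constructor
    · rintro τ ⟨h1, h2⟩
      exact K.down_closed _ hσ₀K τ h1 h2
    · exact simplexC_sc _ (K.nonempty_of_mem _ hσ₀K)
  · intro σ hσ
    have hσF : σ ∈ hfin.toFinset := hfin.mem_toFinset.2 hσ
    refine ⟨e.symm ⟨σ, hσF⟩, ?_⟩
    show σ ∈ (simplexC ((e (e.symm ⟨σ, hσF⟩) : hfin.toFinset) : Finset V)).faces
    rw [Equiv.apply_symm_apply]
    exact ⟨subset_rfl, K.nonempty_of_mem _ hσ⟩

end Aux

end AbsSC

/-- `gscat (K ∗ L) ≤ min (gscat K) (gscat L)`. -/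
theorem gscat_join_le {V W : Type} [DecidableEq V] [DecidableEq W]
    [Fintype V] [Fintype W] (K : AbsSC V) (L : AbsSC W)
    (hK : K.faces.Nonempty) (hL : L.faces.Nonempty) :
    AbsSC.gscat (K.join L) ≤ min (AbsSC.gscat K) (AbsSC.gscat L) := by
  classical
  refine le_min ?_ ?_
  · -- ≤ gscat K
    obtain ⟨n0, hn0⟩ := AbsSC.gcatCover_exists K hK
    have hne : {n | AbsSC.GCatCover K n}.Nonempty := ⟨n0, hn0⟩
    have hmem : AbsSC.GCatCover K (AbsSC.gscat K) := Nat.sInf_mem hne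
    obtain ⟨U, hU, hcov⟩ := hmem
    apply Nat.sInf_le
    refine ⟨fun i => (U i).join L, fun i => ⟨?_, ?_⟩, ?_⟩
    · rintro σ ⟨h1, h2, h3⟩
      exact ⟨h1, fun hn => (hU i).1 (h2 hn), h3⟩
    · exact AbsSC.sc_join_left L (hU i).2
    · rintro σ ⟨h1, h2, h3⟩
      rcases (AbsSC.sumLeft σ).eq_empty_or_nonempty with he | hn
      · exact ⟨0, h1, fun hn' => absurd he (Finset.nonempty_iff_ne_empty.1 hn'), h3⟩
      · obtain ⟨i, hi⟩ := hcov _ (h2 hn)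
        exact ⟨i, h1, fun _ => hi, h3⟩
  · -- ≤ gscat L
    obtain ⟨n0, hn0⟩ := AbsSC.gcatCover_exists L hL
    have hne : {n | AbsSC.GCatCover L n}.Nonempty := ⟨n0, hn0⟩
    have hmem : AbsSC.GCatCover L (AbsSC.gscat L) := Nat.sInf_mem hne
    obtain ⟨U, hU, hcov⟩ := hmem
    apply Nat.sInf_le
    refine ⟨fun i => K.join (U i), fun i => ⟨?_, ?_⟩, ?_⟩
    · rintro σ ⟨h1, h2, h3⟩
      exact ⟨h1, h2, fun hn => (hU i).1 (h3 hn)⟩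
    · exact AbsSC.sc_join_right K (hU i).2
    · rintro σ ⟨h1, h2, h3⟩
      rcases (AbsSC.sumRight σ).eq_empty_or_nonempty with he | hn
      · exact ⟨0, h1, h2, fun hn' => absurd he (Finset.nonempty_iff_ne_empty.1 hn')⟩
      · obtain ⟨i, hi⟩ := hcov _ (h3 hn)
        exact ⟨i, h1, h2, fun _ => hi⟩
end
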